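/- Let G₀ be a group acting on a C*-algebra F by automorphisms α_a : G₀ → Aut(F_a) for each a in a poset Δ, with *-monomorphisms j_{a'a} : F_a → F_{a'} satisfying the gerbe relations j_{|c|c₁} ∘ j_{c₁c₀} = α_{|c|}(δ_c) ∘ j_{|c|c₀} and j_{|b|b₀} ∘ α_{b₀}(g) = α_{|b|}(i_b(g)) ∘ j_{|b|b₀} for a G₀-gerbe (i, δ). Then the fixed-point family R_a := F_a^{G₀} := { t ∈ F_a : α_a(g)(t) = t, ∀g ∈ G₀ } satisfies: (a) j_{a'a}(R_a) ⊆ R_{a'} for a ≤ a'; (b) on R, the restricted maps satisfy the strict net composition law j_{a''a'} ∘ j_{a'a} = j_{a''a} on R_a for a ≤ a' ≤ a''. Hence the fixed points of a Č-C*-gerbe form a genuine net of C*-algebras. -/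

import Mathlib

structure Simplex1 (Δ : Type*) [PartialOrder Δ] where
  d1 : Δ
  d0 : Δ
  supp : Δ
  le1 : d1 ≤ supp
  le0 : d0 ≤ supp

structure Simplex2 (Δ : Type*) [PartialOrder Δ] where
  f0 : Simplex1 Δ
  f1 : Simplex1 Δ
  f2 : Simplex1 Δ
  supp : Δ
  h00 : f0.d0 = f1.d0
  h10 : f0.d1 = f2.d0
  h11 : f1.d1 = f2.d1
  le0 : f0.supp ≤ supp
  le1 : f1.supp ≤ supp
  le2 : f2.supp ≤ supp

/-- The 1-simplex `(b₀ ≤ |b|) ∈ N₁(Δ) ⊆ Σ₁(Δ)`. -/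
def seg {Δ : Type*} [PartialOrder Δ] {a a' : Δ} (h : a ≤ a') : Simplex1 Δ :=
  ⟨a, a', a', h, le_refl a'⟩

/-- The 2-simplex `(c₀ ≤ c₁ ≤ |c|) ∈ N₂(Δ) ⊆ Σ₂(Δ)`. -/
def tri {Δ : Type*} [PartialOrder Δ] {a a' a'' : Δ} (h : a ≤ a') (h' : a' ≤ a'') :
    Simplex2 Δ :=
  ⟨seg h', seg (h.trans h'), seg h, a'', rfl, rfl, rfl, le_refl a'', le_refl a'', h'⟩

open Function

theorem isFixedPt_map_of_semiconj_of_surjective {G H X Y : Type*} {σ : G → H}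
    (hσ : Surjective σ) {α : G → X → X} {β : H → Y → Y} {f : X → Y}
    (hf : ∀ g, Semiconj f (α g) (β (σ g))) {x : X} (hx : ∀ g, IsFixedPt (α g) x) (h : H) :
    IsFixedPt (β h) (f x) := by
  obtain ⟨g, rfl⟩ := hσ h
  exact (hx g).map (hf g)

theorem gerbe_fixed_points_net_general
    {Δ : Type*} [PartialOrder Δ] {G₀ : Type*} [Group G₀]
    (F : Δ → Type*) [∀ a, Ring (F a)] [∀ a, Algebra ℂ (F a)] [∀ a, StarRing (F a)]
    -- the gauge actions `α_a : G₀ → Aut(F_a)`: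
    (α : ∀ a : Δ, G₀ → (F a ≃⋆ₐ[ℂ] F a))
    -- the `G₀`-gerbe `(i, δ)`:
    (i : Simplex1 Δ → (G₀ ≃* G₀)) (δ : Simplex2 Δ → G₀)
    -- the *-monomorphisms of the C*-gerbe:
    (j : ∀ a a' : Δ, a ≤ a' → (F a →⋆ₐ[ℂ] F a'))
    (h1 : ∀ (a a' a'' : Δ) (h : a ≤ a') (h' : a' ≤ a'') (t : F a),
      j a' a'' h' (j a a' h t) = α a'' (δ (tri h h')) (j a a'' (h.trans h') t))
    (h2 : ∀ (a a' : Δ) (h : a ≤ a') (g : G₀) (t : F a),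
      j a a' h (α a g t) = α a' (i (seg h) g) (j a a' h t)) :
    -- (a) the fixed points are preserved:
    (∀ (a a' : Δ) (h : a ≤ a') (t : F a), (∀ g : G₀, α a g t = t) →
      ∀ g : G₀, α a' g (j a a' h t) = j a a' h t) ∧
    -- (b) the strict net composition law on fixed points:
    (∀ (a a' a'' : Δ) (h : a ≤ a') (h' : a' ≤ a'') (t : F a), (∀ g : G₀, α a g t = t) →
      j a' a'' h' (j a a' h t) = j a a'' (h.trans h') t) := by
  have map_fixed : ∀ (a a' : Δ) (h : a ≤ a') (t : F a), (∀ g : G₀, α a g t = t) →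
      ∀ g : G₀, α a' g (j a a' h t) = j a a' h t := fun a a' h _ ht =>
    isFixedPt_map_of_semiconj_of_surjective (α := fun g => α a g) (β := fun g => α a' g)
      (i (seg h)).surjective (fun g => h2 a a' h g) ht
  refine ⟨map_fixed, fun a a' a'' h h' t ht => ?_⟩
  rw [h1, map_fixed a a'' (h.trans h') t ht]

/-- for a `Č𝔊`-C*-gerbe `(F, j)` over a `G₀`-gerbe `(i, δ)`, the fixed-point
family `R_a := F_a^{G₀}` satisfies (a) `j_{a'a}(R_a) ⊆ R_{a'}`; (b) the strict net composition
law `j_{a''a'} ∘ j_{a'a} = j_{a''a}` on `R_a`. Hence fixed points form a genuine net. -/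
theorem gerbe_fixed_points_net
    {Δ : Type*} [PartialOrder Δ] {G₀ : Type*} [Group G₀]
    (F : Δ → Type*) [∀ a, Ring (F a)] [∀ a, Algebra ℂ (F a)] [∀ a, StarRing (F a)]
    -- the gauge actions `α_a : G₀ → Aut(F_a)`:
    (α : ∀ a : Δ, G₀ → (F a ≃⋆ₐ[ℂ] F a))
    (hα1 : ∀ a : Δ, ∀ t : F a, α a 1 t = t)
    (hαmul : ∀ (a : Δ) (g g' : G₀) (t : F a), α a (g * g') t = α a g (α a g' t))
    -- the `G₀`-gerbe `(i, δ)`: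
    (i : Simplex1 Δ → (G₀ ≃* G₀)) (δ : Simplex2 Δ → G₀)
    (hgerbe : ∀ (c : Simplex2 Δ) (g : G₀),
      δ c * i c.f1 g * (δ c)⁻¹ = i c.f0 (i c.f2 g))
    -- the *-monomorphisms of the C*-gerbe:
    (j : ∀ a a' : Δ, a ≤ a' → (F a →⋆ₐ[ℂ] F a'))
    (hjinj : ∀ (a a' : Δ) (h : a ≤ a'), Function.Injective (j a a' h))
    (h1 : ∀ (a a' a'' : Δ) (h : a ≤ a') (h' : a' ≤ a'') (t : F a),
      j a' a'' h' (j a a' h t) = α a'' (δ (tri h h')) (j a a'' (h.trans h') t))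
    (h2 : ∀ (a a' : Δ) (h : a ≤ a') (g : G₀) (t : F a),
      j a a' h (α a g t) = α a' (i (seg h) g) (j a a' h t)) :
    -- (a) the fixed points are preserved:
    (∀ (a a' : Δ) (h : a ≤ a') (t : F a), (∀ g : G₀, α a g t = t) →
      ∀ g : G₀, α a' g (j a a' h t) = j a a' h t) ∧
    -- (b) the strict net composition law on fixed points:
    (∀ (a a' a'' : Δ) (h : a ≤ a') (h' : a' ≤ a'') (t : F a), (∀ g : G₀, α a g t = t) →
      j a' a'' h' (j a a' h t) = j a a'' (h.trans h') t) :=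
  gerbe_fixed_points_net_general F α i δ j h1 h2
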